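/- arXiv:0803.0134 — 5 statements merged into one kernel-verified Lean document; each statement's English description precedes it below -/
import Mathlib

section
/- No (2k+1)-regular multigraph contains 2k+2 pairwise edge-disjoint maximum matchings. -/
/-!
A vertex of degree `2k+1` cannot be covered by all of `2k+2` disjoint matchings, so every vertex
is missed by some maximum matching. By Gallai's lemma, a maximum matching `M` then misses at most
one vertex of each connected component `C`: otherwise exchanges along alternating paths produce
a maximum matching missing two adjacent vertices. But `C` has an even number of vertices, as
`(2k+1) #C` is twice the number of edges of `C`, and `M` covers an even number of them, so the
number of vertices of `C` missed by `M` is even; it is not zero, since `C` is taken to be the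
component of a vertex that `M` misses.
-/

structure Multigraph where
  V : Type
  E : Type
  fintypeV : Fintype V
  decEqV : DecidableEq V
  fintypeE : Fintype E
  decEqE : DecidableEq E
  ends : E → Sym2 V

attribute [instance] Multigraph.fintypeV Multigraph.decEqV Multigraph.fintypeE Multigraph.decEqE

namespace Multigraph

/-- `e` is a loop if both of its endpoints coincide. -/
def IsLoop (G : Multigraph) (e : G.E) : Prop := (G.ends e).IsDiag

/-- A loopless multigraph. -/
def Loopless (G : Multigraph) : Prop := ∀ e, ¬ G.IsLoop e

/-- Degree of a vertex: loops count twice. -/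
def deg (G : Multigraph) (v : G.V) : ℕ :=
  ∑ e : G.E, (if G.ends e = Sym2.diag v then 2 else if v ∈ G.ends e then 1 else 0)

/-- Adjacency via some edge. -/
def Adj (G : Multigraph) (u v : G.V) : Prop := ∃ e, G.ends e = s(u, v)

/-- Connectivity. -/
def Connected (G : Multigraph) : Prop := ∀ u v : G.V, Relation.ReflTransGen G.Adj u v

/-- A matching: a set of non-loop edges no two of which share an endpoint. -/
def IsMatching (G : Multigraph) (M : Finset G.E) : Prop :=
  (∀ e ∈ M, ¬ G.IsLoop e) ∧
  ∀ e ∈ M, ∀ f ∈ M, e ≠ f → ∀ v : G.V, v ∈ G.ends e → v ∉ G.ends f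

/-- A maximum matching. -/
def IsMaximumMatching (G : Multigraph) (M : Finset G.E) : Prop :=
  G.IsMatching M ∧ ∀ M' : Finset G.E, G.IsMatching M' → M'.card ≤ M.card

/-- `v` is saturated by `M`. -/
def Saturated (G : Multigraph) (M : Finset G.E) (v : G.V) : Prop :=
  ∃ e ∈ M, v ∈ G.ends e

/-- Size of a maximum matching. -/
noncomputable def nu1 (G : Multigraph) : ℕ :=
  sSup {m | ∃ M : Finset G.E, G.IsMatching M ∧ M.card = m}

/-- Max number of edges coverable by two disjoint matchings. -/
noncomputable def nu2 (G : Multigraph) : ℕ :=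
  sSup {m | ∃ H H' : Finset G.E, G.IsMatching H ∧ G.IsMatching H' ∧
    Disjoint H H' ∧ H.card + H'.card = m}

/-- Max number of edges coverable by three pairwise disjoint matchings. -/
noncomputable def nu3 (G : Multigraph) : ℕ :=
  sSup {m | ∃ H₁ H₂ H₃ : Finset G.E, G.IsMatching H₁ ∧ G.IsMatching H₂ ∧ G.IsMatching H₃ ∧
    Disjoint H₁ H₂ ∧ Disjoint H₁ H₃ ∧ Disjoint H₂ H₃ ∧ H₁.card + H₂.card + H₃.card = m}

/-- Subdividing the edge `e`, with endpoints `u`, `v`, once: replace it by a path `u - w - v`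
through a new vertex `w`. -/
def subdivideOnce (G : Multigraph) (e : G.E) (u v : G.V) : Multigraph where
  V := G.V ⊕ Unit
  E := {f : G.E // f ≠ e} ⊕ Bool
  fintypeV := inferInstance
  decEqV := inferInstance
  fintypeE := inferInstance
  decEqE := inferInstance
  ends := fun f =>
    match f with
    | Sum.inl ⟨f, _⟩ => (G.ends f).map Sum.inl
    | Sum.inr true => s(Sum.inl u, Sum.inr ())
    | Sum.inr false => s(Sum.inl v, Sum.inr ())

/-- Subdividing every edge `e` exactly `k e` times, where `fst`/`snd` pick out the endpoints
of every edge. The edge `e` is replaced by the path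
`fst e, (e,0), (e,1), …, (e, k e - 1), snd e` of length `k e + 1`. -/
def subdivide (G : Multigraph) (fst snd : G.E → G.V) (k : G.E → ℕ) : Multigraph where
  V := G.V ⊕ (Σ e : G.E, Fin (k e))
  E := Σ e : G.E, Fin (k e + 1)
  fintypeV := inferInstance
  decEqV := inferInstance
  fintypeE := inferInstance
  decEqE := inferInstance
  ends := fun f =>
    s( if h : f.2.val = 0 then Sum.inl (fst f.1)
       else Sum.inr ⟨f.1, ⟨f.2.val - 1, by omega⟩⟩,
       if h : f.2.val = k f.1 then Sum.inl (snd f.1)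
       else Sum.inr ⟨f.1, ⟨f.2.val, by have := f.2.isLt; omega⟩⟩ )

end Multigraph

namespace Finset

variable {α : Type*} [DecidableEq α] {s t : Finset α} {a b : α}

lemma subset_insert_erase (h : s ⊆ t) (ha : a ∉ s) : s ⊆ insert b (t.erase a) :=
  (subset_erase.2 ⟨h, ha⟩).trans (subset_insert b _)

lemma inter_subset_insert_erase_inter (hb : b ∉ t) : s ∩ t ⊆ insert a (s.erase b) ∩ t := by
  grind

lemma sdiff_insert_erase_ssubset (hat : a ∈ t) (has : a ∉ s) (hbt : b ∉ t) :
    t \ insert a (s.erase b) ⊂ t \ s :=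
  (ssubset_iff_of_subset (by grind)).2 ⟨a, by grind, by grind⟩

end Finset

namespace Multigraph

variable {G : Multigraph}

section Matching

variable {M N : Finset G.E} {e f : G.E} {a b c : G.V}

lemma IsMatching.eq_of_mem_ends (hM : G.IsMatching M) (he : e ∈ M) (hf : f ∈ M)
    (hae : a ∈ G.ends e) (haf : a ∈ G.ends f) : e = f := by
  by_contra hef
  exact hM.2 e he f hf hef a hae haf

lemma IsMatching.mono (hM : G.IsMatching M) (hNM : N ⊆ M) : G.IsMatching N :=
  ⟨fun e he => hM.1 e (hNM he), fun e he f hf => hM.2 e (hNM he) f (hNM hf)⟩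

lemma IsMatching.insert_of_not_saturated (hM : G.IsMatching M) (he : ¬ G.IsLoop e)
    (hfree : ∀ a ∈ G.ends e, ¬ G.Saturated M a) : G.IsMatching (insert e M) := by
  refine ⟨fun f hf => ?_, fun f hf g hg hfg a haf hag => ?_⟩
  · rcases Finset.mem_insert.1 hf with rfl | hf
    exacts [he, hM.1 f hf]
  rcases Finset.mem_insert.1 hf with rfl | hfM <;> rcases Finset.mem_insert.1 hg with rfl | hgM
  · exact hfg rfl
  · exact hfree a haf ⟨g, hgM, hag⟩
  · exact hfree a hag ⟨f, hfM, haf⟩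
  · exact hM.2 f hfM g hgM hfg a haf hag

lemma IsMaximumMatching.saturated_of_not_saturated (hM : G.IsMaximumMatching M)
    (he : G.ends e = s(a, b)) (hab : a ≠ b) (ha : ¬ G.Saturated M a) : G.Saturated M b := by
  by_contra hb
  have heM : e ∉ M := fun h => ha ⟨e, h, by simp [he]⟩
  have hloop : ¬ G.IsLoop e := by simpa [IsLoop, he] using hab
  have hfree : ∀ x ∈ G.ends e, ¬ G.Saturated M x := by
    simp only [he, Sym2.mem_iff, forall_eq_or_imp, forall_eq]
    exact ⟨ha, hb⟩
  have hcard := hM.2 _ (hM.1.insert_of_not_saturated hloop hfree)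
  rw [Finset.card_insert_of_notMem heM] at hcard
  omega

-- Exchanging `f ∈ M` for `e` along a path `a -e- b -f- c` with `a` missed by `M` moves the
-- exposed vertex from `a` to `c`.

lemma IsMatching.insert_erase (hM : G.IsMatching M) (he : G.ends e = s(a, b)) (hf : f ∈ M)
    (hfb : b ∈ G.ends f) (ha : ¬ G.Saturated M a) : G.IsMatching (insert e (M.erase f)) := by
  have hab : a ≠ b := by
    rintro rfl
    exact ha ⟨f, hf, hfb⟩
  refine (hM.mono (Finset.erase_subset f M)).insert_of_not_saturated
    (by simpa [IsLoop, he] using hab) ?_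
  rintro x hx ⟨g, hg, hxg⟩
  rw [he, Sym2.mem_iff] at hx
  rcases hx with rfl | rfl
  · exact ha ⟨g, Finset.mem_of_mem_erase hg, hxg⟩
  · exact Finset.ne_of_mem_erase hg (hM.eq_of_mem_ends (Finset.mem_of_mem_erase hg) hf hxg hfb)

lemma not_saturated_insert_erase (hM : G.IsMatching M) (he : G.ends e = s(a, b)) (hf : f ∈ M)
    (hfc : G.ends f = s(b, c)) (ha : ¬ G.Saturated M a) :
    ¬ G.Saturated (insert e (M.erase f)) c := by
  have hMc : G.Saturated M c := ⟨f, hf, by simp [hfc]⟩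
  rintro ⟨g, hg, hcg⟩
  rcases Finset.mem_insert.1 hg with rfl | hg
  · rw [he, Sym2.mem_iff] at hcg
    rcases hcg with rfl | rfl
    · exact ha hMc
    · exact hM.1 f hf (by simp [IsLoop, hfc])
  · exact Finset.ne_of_mem_erase hg
      (hM.eq_of_mem_ends (Finset.mem_of_mem_erase hg) hf hcg (by simp [hfc]))

lemma not_saturated_insert_erase_of_ne (he : G.ends e = s(a, b)) (hf : f ∈ M)
    (hfb : b ∈ G.ends f) {x : G.V} (hxa : x ≠ a) (hx : ¬ G.Saturated M x) :
    ¬ G.Saturated (insert e (M.erase f)) x := by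
  rintro ⟨g, hg, hxg⟩
  rcases Finset.mem_insert.1 hg with rfl | hg
  · rw [he, Sym2.mem_iff] at hxg
    rcases hxg with rfl | rfl
    exacts [hxa rfl, hx ⟨f, hf, hfb⟩]
  · exact hx ⟨g, Finset.mem_of_mem_erase hg, hxg⟩

lemma IsMaximumMatching.insert_erase (hM : G.IsMaximumMatching M) (he : G.ends e = s(a, b))
    (hf : f ∈ M) (hfb : b ∈ G.ends f) (ha : ¬ G.Saturated M a) :
    G.IsMaximumMatching (insert e (M.erase f)) := by
  have heM : e ∉ M.erase f := fun h => ha ⟨e, Finset.mem_of_mem_erase h, by simp [he]⟩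
  have hcard : (insert e (M.erase f)).card = M.card := by
    rw [Finset.card_insert_of_notMem heM, Finset.card_erase_add_one hf]
  exact ⟨hM.1.insert_erase he hf hfb ha, fun K hK => hcard ▸ hM.2 K hK⟩

end Matching

section AlternatingPath

variable {M N : Finset G.E} {u : G.V}

lemma exists_alternating_step (hM : G.IsMaximumMatching M) (hN : G.IsMatching N)
    (hMu : ¬ G.Saturated M u) (hNu : G.Saturated N u) :
    ∃ e ∈ N, ∃ f ∈ M, ∃ b c, G.ends e = s(u, b) ∧ G.ends f = s(b, c) := by
  obtain ⟨e, heN, hue⟩ := hNu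
  obtain ⟨b, he⟩ := Sym2.mem_iff_exists.1 hue
  have hub : u ≠ b := fun h => hN.1 e heN (by simp [IsLoop, he, h])
  obtain ⟨f, hfM, hbf⟩ := hM.saturated_of_not_saturated he hub hMu
  obtain ⟨c, hf⟩ := Sym2.mem_iff_exists.1 hbf
  exact ⟨e, heN, f, hfM, b, c, he, hf⟩

/-- `M'` and `N'` are `M` and `N` switched along the alternating path that leaves `u` by an edge
of `N` and ends at the first vertex `z` missed by `N`. The conjunct `M ∩ N ⊆ N'` carries the
induction on `#(N \ M)`. -/
theorem exists_swap_along_alternating_path (hM : G.IsMaximumMatching M)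
    (hN : G.IsMaximumMatching N) (hMu : ¬ G.Saturated M u) (hNu : G.Saturated N u) :
    ∃ z, ¬ G.Saturated N z ∧
      (∃ M', G.IsMaximumMatching M' ∧ ¬ G.Saturated M' z ∧
        ∀ x ≠ u, ¬ G.Saturated M x → ¬ G.Saturated M' x) ∧
      (∃ N', G.IsMaximumMatching N' ∧ M ∩ N ⊆ N' ∧ ¬ G.Saturated N' u ∧
        ∀ x ≠ z, ¬ G.Saturated N x → ¬ G.Saturated N' x) := by
  induction hn : (N \ M).card using Nat.strong_induction_on generalizing M u with
  | _ n ih =>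
  obtain ⟨e, heN, f, hfM, b, c, he, hf⟩ := exists_alternating_step hM hN.1 hMu hNu
  have hbe : b ∈ G.ends e := by simp [he]
  have hbf : b ∈ G.ends f := by simp [hf]
  have heM : e ∉ M := fun h => hMu ⟨e, h, by simp [he]⟩
  have hfN : f ∉ N := fun h => heM (hN.1.eq_of_mem_ends heN h hbe hbf ▸ hfM)
  have hMc : G.Saturated M c := ⟨f, hfM, by simp [hf]⟩
  set M₁ := insert e (M.erase f)
  have hM₁ : G.IsMaximumMatching M₁ := hM.insert_erase he hfM hbf hMu
  have hM₁c : ¬ G.Saturated M₁ c := not_saturated_insert_erase hM.1 he hfM hf hMu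
  have hM₁M : ∀ x ≠ u, ¬ G.Saturated M x → ¬ G.Saturated M₁ x := fun x hxu hx =>
    not_saturated_insert_erase_of_ne he hfM hbf hxu hx
  have hMN : M ∩ N ⊆ M₁ ∩ N := Finset.inter_subset_insert_erase_inter hfN
  have heMN : e ∉ M ∩ N := fun h => heM (Finset.mem_inter.1 h).1
  have hf' : G.ends f = s(c, b) := by rw [hf, Sym2.eq_swap]
  have he' : G.ends e = s(b, u) := by rw [he, Sym2.eq_swap]
  by_cases hNc : G.Saturated N c
  · obtain ⟨z, hNz, ⟨M', hM', hM'z, hM'M₁⟩, ⟨N', hN', hM₁N', hN'c, hN'N⟩⟩ :=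
      ih _ (hn ▸ Finset.card_lt_card (Finset.sdiff_insert_erase_ssubset heN heM hfN))
        hM₁ hM₁c hNc rfl
    have heN' : e ∈ N' := hM₁N' (Finset.mem_inter.2 ⟨Finset.mem_insert_self e _, heN⟩)
    refine ⟨z, hNz, ⟨M', hM', hM'z, fun x hxu hx => hM'M₁ x ?_ (hM₁M x hxu hx)⟩,
      ⟨_, hN'.insert_erase hf' heN' hbe hN'c,
        Finset.subset_insert_erase (hMN.trans hM₁N') heMN,
        not_saturated_insert_erase hN'.1 hf' heN' he' hN'c,
        fun x hxz hx => not_saturated_insert_erase_of_ne hf' heN' hbe ?_ (hN'N x hxz hx)⟩⟩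
    · rintro rfl
      exact hx hMc
    · rintro rfl
      exact hx hNc
  · exact ⟨c, hNc, ⟨M₁, hM₁, hM₁c, hM₁M⟩, ⟨_, hN.insert_erase hf' heN hbe hNc,
      Finset.subset_insert_erase Finset.inter_subset_right heMN,
      not_saturated_insert_erase hN.1 hf' heN he' hNc,
      fun x hxc hx => not_saturated_insert_erase_of_ne hf' heN hbe hxc hx⟩⟩

end AlternatingPath

theorem eq_of_reflTransGen_of_not_saturated
    (hG : ∀ w, ∃ N, G.IsMaximumMatching N ∧ ¬ G.Saturated N w) {u v : G.V}
    (huv : Relation.ReflTransGen G.Adj u v) {M : Finset G.E} (hM : G.IsMaximumMatching M)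
    (hMu : ¬ G.Saturated M u) (hMv : ¬ G.Saturated M v) : u = v := by
  induction huv using Relation.ReflTransGen.head_induction_on generalizing M with
  | refl => rfl
  | @head u w huw _ ih =>
    obtain ⟨d, hd⟩ := huw
    by_cases hMw : G.Saturated M w
    swap
    · obtain rfl := ih hM hMw hMv
      by_contra huw
      exact hMw (hM.saturated_of_not_saturated hd huw hMu)
    have huw : u ≠ w := fun h => hMu (h ▸ hMw)
    obtain ⟨N, hN, hNw⟩ := hG w
    have hNu : G.Saturated N u :=
      hN.saturated_of_not_saturated (by rw [hd, Sym2.eq_swap]) huw.symm hNw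
    obtain ⟨z, hNz, ⟨M', hM', hM'z, hM'M⟩, ⟨N', hN', -, hN'u, hN'N⟩⟩ :=
      exists_swap_along_alternating_path hM hN hMu hNu
    by_cases hzw : z = w
    · subst hzw
      rcases eq_or_ne v u with rfl | hvu
      · rfl
      · exact absurd (ih hM' hM'z (hM'M v hvu hMv) ▸ hMw) hMv
    -- otherwise `N'` misses the adjacent vertices `u` and `w`
    · exact absurd (hN'.saturated_of_not_saturated hd huw hN'u) (hN'N w (Ne.symm hzw) hNw)

section Parity

open Classical

variable {M : Finset G.E} {C : Finset G.V}

def AdjClosed (G : Multigraph) (C : Finset G.V) : Prop := ∀ x y, x ∈ C → G.Adj x y → y ∈ C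

lemma deg_eq_card_filter_mem_ends (hl : G.Loopless) (v : G.V) :
    G.deg v = (Finset.univ.filter (v ∈ G.ends ·)).card := by
  rw [Finset.card_filter, deg]
  refine Finset.sum_congr rfl fun e _ => if_neg fun h => hl e ?_
  rw [IsLoop, h]
  exact Sym2.diag_isDiag v

lemma exists_not_saturated_of_deg_lt (hl : G.Loopless) {ι : Type*} [Fintype ι]
    {F : ι → Finset G.E} (hF : Pairwise fun i j => Disjoint (F i) (F j)) {v : G.V}
    (hv : G.deg v < Fintype.card ι) : ∃ i, ¬ G.Saturated (F i) v := by
  by_contra! hsat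
  choose e heF hve using hsat
  have hcard := Finset.card_le_card_of_injOn (s := Finset.univ)
    (t := Finset.univ.filter (v ∈ G.ends ·)) e (fun i _ => by simp [hve i])
    fun i _ j _ hij => by
      by_contra hne
      exact Finset.disjoint_left.1 (hF hne) (heF i) (hij ▸ heF j)
  rw [Finset.card_univ, ← deg_eq_card_filter_mem_ends hl] at hcard
  omega

lemma even_card_filter_mem_ends (hC : G.AdjClosed C) {e : G.E} (he : ¬ G.IsLoop e) :
    Even (C.filter (· ∈ G.ends e)).card := by
  obtain ⟨a, b, hab⟩ := (Sym2.exists (f := (G.ends e = ·))).1 ⟨_, rfl⟩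
  have hne : a ≠ b := by simpa [IsLoop, hab] using he
  by_cases ha : a ∈ C
  · have hb : b ∈ C := hC a b ha ⟨e, hab⟩
    have hfilter : C.filter (· ∈ G.ends e) = {a, b} := by
      ext x
      simp only [hab, Sym2.mem_iff, Finset.mem_filter, Finset.mem_insert, Finset.mem_singleton]
      constructor
      · exact And.right
      · rintro (rfl | rfl)
        exacts [⟨ha, Or.inl rfl⟩, ⟨hb, Or.inr rfl⟩]
    rw [hfilter, Finset.card_pair hne]
    exact even_two
  · have hb : b ∉ C := fun hb => ha (hC b a hb ⟨e, by rw [hab, Sym2.eq_swap]⟩)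
    have hfilter : C.filter (· ∈ G.ends e) = ∅ := by
      ext x
      simp only [hab, Sym2.mem_iff, Finset.mem_filter, Finset.notMem_empty, iff_false, not_and]
      rintro hx (rfl | rfl)
      exacts [ha hx, hb hx]
    rw [hfilter, Finset.card_empty]
    exact Even.zero

lemma even_sum_deg (hl : G.Loopless) (hC : G.AdjClosed C) : Even (∑ x ∈ C, G.deg x) := by
  have hsum : ∑ x ∈ C, G.deg x = ∑ e, (C.filter (· ∈ G.ends e)).card := by
    simp only [deg_eq_card_filter_mem_ends hl, Finset.card_filter]
    exact Finset.sum_comm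
  rw [hsum]
  exact Finset.even_sum _ fun e _ => even_card_filter_mem_ends hC (hl e)

lemma even_card_filter_saturated (hM : G.IsMatching M) (hC : G.AdjClosed C) :
    Even (C.filter (G.Saturated M ·)).card := by
  have hunion : C.filter (G.Saturated M ·) = M.biUnion fun e => C.filter (· ∈ G.ends e) := by
    ext x
    rw [Finset.mem_filter, Finset.mem_biUnion]
    simp only [Finset.mem_filter, Saturated]
    tauto
  rw [hunion, Finset.card_biUnion fun e he f hf hef => Finset.disjoint_left.2 fun x hxe hxf =>
    hM.2 e he f hf hef x (Finset.mem_filter.1 hxe).2 (Finset.mem_filter.1 hxf).2]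
  exact Finset.even_sum _ fun e he => even_card_filter_mem_ends hC (hM.1 e he)

lemma even_card_filter_not_saturated (hl : G.Loopless) {k : ℕ}
    (hreg : ∀ v, G.deg v = 2 * k + 1) (hM : G.IsMatching M)
    (hC : G.AdjClosed C) : Even (C.filter (¬ G.Saturated M ·)).card := by
  have hCeven : Even C.card := by
    have h := even_sum_deg hl hC
    rw [Finset.sum_congr rfl fun x _ => hreg x, Finset.sum_const, smul_eq_mul,
      Nat.even_mul] at h
    exact h.resolve_right (by simp)
  rw [← Finset.card_filter_add_card_filter_not (G.Saturated M ·)] at hCeven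
  exact (Nat.even_add.1 hCeven).1 (even_card_filter_saturated hM hC)

end Parity

/-- No (2k+1)-regular multigraph contains 2k+2 pairwise edge-disjoint
maximum matchings. -/
theorem no_odd_regular_has_many_disjoint_maximum_matchings
    (G : Multigraph) (k : ℕ) (hne : Nonempty G.V) (hloopless : G.Loopless)
    (hreg : ∀ v : G.V, G.deg v = 2 * k + 1)
    (F : Fin (2 * k + 2) → Finset G.E)
    (hmax : ∀ i, G.IsMaximumMatching (F i))
    (hdisj : ∀ i j, i ≠ j → Disjoint (F i) (F j)) : False := by
  classical
  have hG : ∀ w, ∃ M, G.IsMaximumMatching M ∧ ¬ G.Saturated M w := fun w => by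
    obtain ⟨i, hi⟩ := exists_not_saturated_of_deg_lt hloopless hdisj (v := w) (by simp [hreg])
    exact ⟨F i, hmax i, hi⟩
  obtain ⟨u⟩ := hne
  obtain ⟨M, hM, hMu⟩ := hG u
  set C := Finset.univ.filter (Relation.ReflTransGen G.Adj u)
  have hC : G.AdjClosed C := fun x y hx hxy => by
    simp only [C, Finset.mem_filter, Finset.mem_univ, true_and] at hx ⊢
    exact hx.tail hxy
  have hunsat : C.filter (¬ G.Saturated M ·) = {u} := by
    ext x
    simp only [C, Finset.mem_filter, Finset.mem_univ, true_and, Finset.mem_singleton]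
    refine ⟨fun ⟨hux, hMx⟩ => ?_, ?_⟩
    · exact (eq_of_reflTransGen_of_not_saturated hG hux hM hMu hMx).symm
    rintro rfl
    exact ⟨Relation.ReflTransGen.refl, hMu⟩
  have hodd := even_card_filter_not_saturated hloopless hreg hM.1 hC
  rw [hunsat, Finset.card_singleton] at hodd
  exact Nat.not_even_one hodd

end Multigraph
end

section
/- If G is a connected simple r-regular graph containing r+1 pairwise edge-disjoint maximum matchings, then r is even and G is the complete graph on r+1 vertices. -/
/-!
Each vertex is missed by one of the `r + 1` matchings: the edges covering it in distinct
matchings are distinct, and only `r` edges meet it. By Gallai's lemma a connected graph in which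
every vertex is missed by some maximum matching is factor-critical, so a maximum matching misses
exactly one vertex and `|V| = 2ν + 1`. Counting edges, `(r + 1) ν ≤ |E| = (2ν + 1) r / 2` gives
`2ν ≤ r`, while `r < |V|`; hence `r = 2ν`, `|V| = r + 1` and `G` is complete.

Gallai's lemma is the usual exchange argument. Take a maximum matching `f` missing `u ≠ v` with
`d(u, v)` minimal, a neighbour `t` of `u` closer to `v`, and a maximum matching `g` missing `t`
with `g \ f` as small as possible. On the component `P` of `u` in `f ∪ g` both matchings have
equally many edges, and a spanning tree of `P` has `|P| - 1` edges, so `u` is the only vertex of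
`P` that `f` misses. Swapping `f` and `g` on `P` yields either a maximum matching missing `t` and
`v`, or one missing `t` that is closer to `f` than `g` is.
-/

def SimpleGraph.IsFinsetMatching {V : Type} (G : SimpleGraph V) (M : Finset (Sym2 V)) : Prop :=
  (↑M : Set (Sym2 V)) ⊆ G.edgeSet ∧
    ∀ e ∈ M, ∀ f ∈ M, e ≠ f → ∀ v : V, v ∈ e → v ∉ f

def SimpleGraph.IsFinsetMaximumMatching {V : Type} (G : SimpleGraph V)
    (M : Finset (Sym2 V)) : Prop :=
  G.IsFinsetMatching M ∧ ∀ M' : Finset (Sym2 V), G.IsFinsetMatching M' → M'.card ≤ M.card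

open Finset

namespace SimpleGraph

variable {V : Type} {G : SimpleGraph V} {M N f g T : Finset (Sym2 V)} {P : Finset V}
  {u v w x : V} {e : Sym2 V}

lemma IsFinsetMatching.subset (hM : G.IsFinsetMatching M) (h : N ⊆ M) : G.IsFinsetMatching N :=
  ⟨fun _ he => hM.1 (h he), fun e he f hf => hM.2 e (h he) f (h hf)⟩

lemma IsFinsetMaximumMatching.card_eq (hM : G.IsFinsetMaximumMatching M)
    (hN : G.IsFinsetMaximumMatching N) : #M = #N :=
  le_antisymm (hN.2 M hM.1) (hM.2 N hN.1)

lemma Reachable.exists_adj_dist_lt (h : G.Reachable u v) (huv : u ≠ v) :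
    ∃ t, G.Adj u t ∧ G.dist t v < G.dist u v := by
  obtain ⟨p, hp⟩ := h.exists_walk_length_eq_dist
  cases p with
  | nil => exact absurd rfl huv
  | cons hadj q =>
    have := dist_le q
    rw [Walk.length_cons] at hp
    exact ⟨_, hadj, by omega⟩

lemma IsRegularOfDegree.eq_top_of_card_eq [Fintype V] [DecidableRel G.Adj] {r : ℕ}
    (hreg : G.IsRegularOfDegree r) (hV : Fintype.card V = r + 1) : G = ⊤ := by
  ext a b
  rw [top_adj]
  refine ⟨Adj.ne, fun hab => (G.degree_eq_card_sub_one a).1 ?_ hab⟩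
  rw [hreg a, hV, Nat.add_sub_cancel]

variable [DecidableEq V]

def coveredVerts (M : Finset (Sym2 V)) : Finset V :=
  M.biUnion Sym2.toFinset

@[simp]
lemma mem_coveredVerts : v ∈ coveredVerts M ↔ ∃ e ∈ M, v ∈ e := by
  simp [coveredVerts]

def edgesInside (M : Finset (Sym2 V)) (P : Finset V) : Finset (Sym2 V) :=
  M.filter (·.toFinset ⊆ P)

lemma mem_edgesInside : e ∈ edgesInside M P ↔ e ∈ M ∧ ∀ x ∈ e, x ∈ P := by
  simp [edgesInside, subset_iff]

lemma edgesInside_subset (M : Finset (Sym2 V)) (P : Finset V) : edgesInside M P ⊆ M :=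
  filter_subset _ _

def IsEdgeClosed (M : Finset (Sym2 V)) (P : Finset V) : Prop :=
  ∀ e ∈ M, ∀ x ∈ e, x ∈ P → ∀ y ∈ e, y ∈ P

lemma IsEdgeClosed.mem_edgesInside (hP : IsEdgeClosed M P) (he : e ∈ M) (hx : x ∈ e)
    (hxP : x ∈ P) : e ∈ edgesInside M P :=
  SimpleGraph.mem_edgesInside.2 ⟨he, hP e he x hx hxP⟩

lemma IsEdgeClosed.notMem_of_mem_sdiff (hP : IsEdgeClosed M P) (he : e ∈ M \ edgesInside M P)
    (hx : x ∈ e) : x ∉ P :=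
  fun hxP => (mem_sdiff.1 he).2 (hP.mem_edgesInside (mem_sdiff.1 he).1 hx hxP)

def switch (f g : Finset (Sym2 V)) (P : Finset V) : Finset (Sym2 V) :=
  (f \ edgesInside f P) ∪ edgesInside g P

lemma card_switch : #(switch f g P) = #f - #(edgesInside f P) + #(edgesInside g P) := by
  rw [switch, card_union_of_disjoint, card_sdiff_of_subset (edgesInside_subset f P)]
  refine Finset.disjoint_left.2 fun e he he' => (mem_sdiff.1 he).2 ?_
  exact mem_edgesInside.2 ⟨(mem_sdiff.1 he).1, (mem_edgesInside.1 he').2⟩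

lemma notMem_coveredVerts_switch_of_mem (hfP : IsEdgeClosed f P) (hw : w ∈ P)
    (hwg : w ∉ coveredVerts g) : w ∉ coveredVerts (switch f g P) := by
  rw [mem_coveredVerts]
  rintro ⟨e, he, hwe⟩
  rcases mem_union.1 he with he | he
  · exact hfP.notMem_of_mem_sdiff he hwe hw
  · exact hwg (mem_coveredVerts.2 ⟨e, (mem_edgesInside.1 he).1, hwe⟩)

lemma notMem_coveredVerts_switch_of_notMem (hw : w ∉ P) (hwf : w ∉ coveredVerts f) :
    w ∉ coveredVerts (switch f g P) := by
  rw [mem_coveredVerts]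
  rintro ⟨e, he, hwe⟩
  rcases mem_union.1 he with he | he
  · exact hwf (mem_coveredVerts.2 ⟨e, (mem_sdiff.1 he).1, hwe⟩)
  · exact hw ((mem_edgesInside.1 he).2 w hwe)

lemma card_switch_sdiff_lt (hgP : IsEdgeClosed g P) (hu : u ∈ P) (hug : u ∈ coveredVerts g)
    (huf : u ∉ coveredVerts f) : #(switch g f P \ f) < #(g \ f) := by
  obtain ⟨e, he, hue⟩ := mem_coveredVerts.1 hug
  have he' : e ∈ g \ f :=
    mem_sdiff.2 ⟨he, fun hef => huf (mem_coveredVerts.2 ⟨e, hef, hue⟩)⟩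
  refine (card_le_card fun x hx => ?_).trans_lt (card_erase_lt_of_mem he')
  obtain ⟨hx, hxf⟩ := mem_sdiff.1 hx
  rcases mem_union.1 hx with hx | hx
  · obtain ⟨hxg, hxP⟩ := mem_sdiff.1 hx
    exact mem_erase.2
      ⟨fun hxe => hxP (hxe ▸ hgP.mem_edgesInside he hue hu), mem_sdiff.2 ⟨hxg, hxf⟩⟩
  · exact absurd (edgesInside_subset f P hx) hxf

lemma IsFinsetMatching.card_coveredVerts (hM : G.IsFinsetMatching M) :
    #(coveredVerts M) = 2 * #M := by
  rw [coveredVerts, card_biUnion, mul_comm,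
    sum_const_nat fun e he => Sym2.card_toFinset_of_not_isDiag e
      (G.not_isDiag_of_mem_edgeSet (hM.1 he))]
  exact fun e he f hf hef => Finset.disjoint_left.2 fun v hve hvf =>
    hM.2 e he f hf hef v (Sym2.mem_toFinset.1 hve) (Sym2.mem_toFinset.1 hvf)

lemma IsFinsetMatching.card_filter_mem_coveredVerts (hM : G.IsFinsetMatching M)
    (hP : IsEdgeClosed M P) : #{w ∈ P | w ∈ coveredVerts M} = 2 * #(edgesInside M P) := by
  rw [← (hM.subset (edgesInside_subset M P)).card_coveredVerts]
  congr 1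
  ext w
  simp only [mem_filter, mem_coveredVerts]
  constructor
  · rintro ⟨hw, e, he, hwe⟩
    exact ⟨e, hP.mem_edgesInside he hwe hw, hwe⟩
  · rintro ⟨e, he, hwe⟩
    exact ⟨(mem_edgesInside.1 he).2 w hwe, e, (mem_edgesInside.1 he).1, hwe⟩

lemma IsFinsetMatching.insert (hM : G.IsFinsetMatching M) (huv : G.Adj u v)
    (hu : u ∉ coveredVerts M) (hv : v ∉ coveredVerts M) :
    G.IsFinsetMatching (insert s(u, v) M) := by
  have hfree : ∀ e ∈ M, ∀ w ∈ s(u, v), w ∉ e := by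
    rintro e he w hw hwe
    rcases Sym2.mem_iff.1 hw with rfl | rfl
    · exact hu (mem_coveredVerts.2 ⟨e, he, hwe⟩)
    · exact hv (mem_coveredVerts.2 ⟨e, he, hwe⟩)
  refine ⟨?_, ?_⟩
  · rw [coe_insert, Set.insert_subset_iff]
    exact ⟨huv, hM.1⟩
  · simp only [mem_insert]
    rintro e (rfl | he) e' (rfl | he') hne w hwe hwe'
    · exact hne rfl
    · exact hfree e' he' w hwe hwe'
    · exact hfree e he w hwe' hwe
    · exact hM.2 e he e' he' hne w hwe hwe'

lemma IsFinsetMatching.switch (hf : G.IsFinsetMatching f) (hg : G.IsFinsetMatching g)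
    (hfP : IsEdgeClosed f P) : G.IsFinsetMatching (switch f g P) := by
  refine ⟨fun e he => ?_, ?_⟩
  · rcases mem_union.1 he with he | he
    · exact hf.1 (mem_sdiff.1 he).1
    · exact hg.1 (mem_edgesInside.1 he).1
  · simp only [SimpleGraph.switch, mem_union]
    rintro e (he | he) e' (he' | he') hne w hwe hwe'
    · exact hf.2 e (mem_sdiff.1 he).1 e' (mem_sdiff.1 he').1 hne w hwe hwe'
    · exact hfP.notMem_of_mem_sdiff he hwe ((mem_edgesInside.1 he').2 w hwe')
    · exact hfP.notMem_of_mem_sdiff he' hwe' ((mem_edgesInside.1 he).2 w hwe)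
    · exact hg.2 e (mem_edgesInside.1 he).1 e' (mem_edgesInside.1 he').1 hne w hwe hwe'

lemma IsFinsetMaximumMatching.mem_coveredVerts_of_adj (hM : G.IsFinsetMaximumMatching M)
    (huv : G.Adj u v) (hu : u ∉ coveredVerts M) : v ∈ coveredVerts M := by
  by_contra hv
  have hnew : s(u, v) ∉ M := fun h => hu (mem_coveredVerts.2 ⟨_, h, Sym2.mem_mk_left u v⟩)
  have := hM.2 _ (hM.1.insert huv hu hv)
  rw [card_insert_of_notMem hnew] at this
  omega

lemma IsFinsetMaximumMatching.card_edgesInside_eq (hf : G.IsFinsetMaximumMatching f)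
    (hg : G.IsFinsetMaximumMatching g) (hfP : IsEdgeClosed f P) (hgP : IsEdgeClosed g P) :
    #(edgesInside f P) = #(edgesInside g P) := by
  have hfg := hf.2 _ (hf.1.switch hg.1 hfP)
  have hgf := hg.2 _ (hg.1.switch hf.1 hgP)
  rw [card_switch] at hfg hgf
  have := card_le_card (edgesInside_subset f P)
  have := card_le_card (edgesInside_subset g P)
  omega

lemma IsFinsetMaximumMatching.switch (hf : G.IsFinsetMaximumMatching f)
    (hg : G.IsFinsetMaximumMatching g) (hfP : IsEdgeClosed f P) (hgP : IsEdgeClosed g P) :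
    G.IsFinsetMaximumMatching (switch f g P) := by
  refine ⟨hf.1.switch hg.1 hfP, fun M hM => ?_⟩
  rw [card_switch, ← hf.card_edgesInside_eq hg hfP hgP,
    Nat.sub_add_cancel (card_le_card (edgesInside_subset f P))]
  exact hf.2 M hM

section Fintype

variable [Fintype V]

open Classical in
noncomputable def edgeComponent (T : Finset (Sym2 V)) (u : V) : Finset V :=
  {w | (fromEdgeSet (T : Set (Sym2 V))).Reachable u w}

@[simp]
lemma mem_edgeComponent :
    w ∈ edgeComponent T u ↔ (fromEdgeSet (T : Set (Sym2 V))).Reachable u w := by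
  simp [edgeComponent]

lemma self_mem_edgeComponent (T : Finset (Sym2 V)) (u : V) : u ∈ edgeComponent T u :=
  mem_edgeComponent.2 (Reachable.refl u)

lemma isEdgeClosed_edgeComponent (hMT : M ⊆ T) (u : V) : IsEdgeClosed M (edgeComponent T u) := by
  intro e he x hx hxP y hy
  rw [mem_edgeComponent] at hxP ⊢
  by_cases hxy : x = y
  · exact hxy ▸ hxP
  · have hadj : (fromEdgeSet (T : Set (Sym2 V))).Adj x y := by
      rw [fromEdgeSet_adj, ← (Sym2.mem_and_mem_iff hxy).1 ⟨hx, hy⟩]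
      exact ⟨hMT he, hxy⟩
    exact hxP.trans hadj.reachable

lemma card_edgeComponent_le (T : Finset (Sym2 V)) (u : V) :
    #(edgeComponent T u) ≤ #(edgesInside T (edgeComponent T u)) + 1 := by
  set C := (fromEdgeSet (T : Set (Sym2 V))).connectedComponentMk u
  have hC : ∀ w, w ∈ C.supp ↔ w ∈ edgeComponent T u := by
    intro w
    simp [C, ConnectedComponent.eq, reachable_comm]
  have hverts : Nat.card C = #(edgeComponent T u) := by
    rw [← Nat.card_eq_finsetCard]
    exact Nat.card_congr (Equiv.subtypeEquivRight hC)
  have hedges : Nat.card C.toSimpleGraph.edgeSet ≤ #(edgesInside T (edgeComponent T u)) := by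
    rw [← Nat.card_eq_finsetCard]
    refine Nat.card_le_card_of_injective (fun e => ⟨Sym2.map Subtype.val e.1, ?_⟩) ?_
    · obtain ⟨e, he⟩ := e
      induction e with
      | h a b =>
        simp only [ConnectedComponent.toSimpleGraph, mem_edgeSet, comap_adj,
          Function.Embedding.coe_subtype, fromEdgeSet_adj, mem_coe] at he
        refine mem_edgesInside.2 ⟨he.1, ?_⟩
        rintro x hx
        rcases Sym2.mem_iff.1 hx with rfl | rfl
        · exact (hC _).1 a.2
        · exact (hC _).1 b.2
    · rintro ⟨e, he⟩ ⟨e', he'⟩ h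
      exact Subtype.ext (Sym2.map.injective Subtype.val_injective (congrArg Subtype.val h))
  have := C.connected_toSimpleGraph.card_vert_le_card_edgeSet_add_one
  omega

lemma IsFinsetMaximumMatching.eq_of_mem_edgeComponent (hf : G.IsFinsetMaximumMatching f)
    (hg : G.IsFinsetMaximumMatching g) (hu : u ∉ coveredVerts f)
    (hw : w ∈ edgeComponent (f ∪ g) u) (hwf : w ∉ coveredVerts f) : w = u := by
  set P := edgeComponent (f ∪ g) u
  have hfP : IsEdgeClosed f P := isEdgeClosed_edgeComponent subset_union_left u
  have hgP : IsEdgeClosed g P := isEdgeClosed_edgeComponent subset_union_right u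
  have hedges : #P ≤ #(edgesInside f P) + #(edgesInside g P) + 1 :=
    calc #P ≤ #(edgesInside (f ∪ g) P) + 1 := card_edgeComponent_le _ _
      _ ≤ #(edgesInside f P) + #(edgesInside g P) + 1 := by
        rw [edgesInside, filter_union]
        exact Nat.add_le_add_right (card_union_le _ _) 1
  have hcovered := hf.1.card_filter_mem_coveredVerts hfP
  have hsplit := card_filter_add_card_filter_not (s := P) (· ∈ coveredVerts f)
  have hexposed : #{w ∈ P | w ∉ coveredVerts f} ≤ 1 := by
    have := hf.card_edgesInside_eq hg hfP hgP
    omega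
  exact card_le_one.1 hexposed w (mem_filter.2 ⟨hw, hwf⟩) u
    (mem_filter.2 ⟨self_mem_edgeComponent _ u, hu⟩)

/-- Gallai's lemma. -/
theorem IsFinsetMaximumMatching.eq_of_notMem_coveredVerts (hconn : G.Connected)
    (havoid : ∀ v, ∃ M, G.IsFinsetMaximumMatching M ∧ v ∉ coveredVerts M)
    (hf : G.IsFinsetMaximumMatching f) (hu : u ∉ coveredVerts f) (hv : v ∉ coveredVerts f) :
    u = v := by
  classical
  induction hd : G.dist u v using Nat.strong_induction_on generalizing f u with
  | _ d ih =>
    by_contra huv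
    obtain ⟨t, hut, htv⟩ := (hconn.preconnected u v).exists_adj_dist_lt huv
    have htf : t ∈ coveredVerts f := hf.mem_coveredVerts_of_adj hut hu
    have hcover : ∀ g, G.IsFinsetMaximumMatching g → t ∉ coveredVerts g →
        v ∈ coveredVerts g := fun g hg htg =>
      by_contra fun hvg => hv (ih _ (hd ▸ htv) hg htg hvg rfl ▸ htf)
    obtain ⟨g, hgmem, hgmin⟩ := exists_min_image
      {g : Finset (Sym2 V) | G.IsFinsetMaximumMatching g ∧ t ∉ coveredVerts g}
      (fun g => #(g \ f))
      ((havoid t).elim fun g₀ hg₀ => ⟨g₀, mem_filter.2 ⟨mem_univ _, hg₀⟩⟩)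
    obtain ⟨hg, htg⟩ := (mem_filter.1 hgmem).2
    have hug : u ∈ coveredVerts g := hg.mem_coveredVerts_of_adj hut.symm htg
    set P := edgeComponent (f ∪ g) u
    have hfP : IsEdgeClosed f P := isEdgeClosed_edgeComponent subset_union_left u
    have hgP : IsEdgeClosed g P := isEdgeClosed_edgeComponent subset_union_right u
    by_cases htP : t ∈ P
    · have hvP : v ∉ P := fun hvP => huv (hf.eq_of_mem_edgeComponent hg hu hvP hv).symm
      exact notMem_coveredVerts_switch_of_notMem hvP hv <| hcover _ (hf.switch hg hfP hgP)
        (notMem_coveredVerts_switch_of_mem hfP htP htg)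
    · have := hgmin _ (mem_filter.2 ⟨mem_univ _, hg.switch hf hgP hfP,
        notMem_coveredVerts_switch_of_notMem htP htg⟩)
      have := card_switch_sdiff_lt hgP (self_mem_edgeComponent _ u) hug hu
      omega

lemma IsFinsetMatching.card_eq_two_mul_add_one (hM : G.IsFinsetMatching M)
    (hv : v ∉ coveredVerts M) (honly : ∀ w, w ∉ coveredVerts M → w = v) :
    Fintype.card V = 2 * #M + 1 := by
  have hexposed : univ \ coveredVerts M = {v} :=
    eq_singleton_iff_unique_mem.2 ⟨mem_sdiff.2 ⟨mem_univ v, hv⟩,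
      fun w hw => honly w (mem_sdiff.1 hw).2⟩
  have := card_sdiff_of_subset (subset_univ (coveredVerts M))
  rw [hexposed, card_singleton, card_univ, hM.card_coveredVerts] at this
  have := card_le_univ (coveredVerts M)
  rw [hM.card_coveredVerts] at this
  omega

variable [DecidableRel G.Adj]

lemma card_le_degree_of_forall_mem_coveredVerts {ι : Type*} [Fintype ι]
    {F : ι → Finset (Sym2 V)} (hF : ∀ i, ↑(F i) ⊆ G.edgeSet)
    (hdisj : Pairwise fun i j => Disjoint (F i) (F j)) (hv : ∀ i, v ∈ coveredVerts (F i)) :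
    Fintype.card ι ≤ G.degree v := by
  choose e he hve using fun i => mem_coveredVerts.1 (hv i)
  rw [← card_incidenceFinset_eq_degree, ← card_univ]
  refine card_le_card_of_injOn e (fun i _ => ?_) fun i _ j _ hij => ?_
  · exact (mem_incidenceFinset _ _ _).2 ⟨hF i (he i), hve i⟩
  · by_contra hne
    exact Finset.disjoint_left.1 (hdisj hne) (he i) (hij ▸ he j)

lemma sum_card_le_card_edgeFinset {ι : Type*} [Fintype ι] {F : ι → Finset (Sym2 V)}
    (hF : ∀ i, ↑(F i) ⊆ G.edgeSet) (hdisj : Pairwise fun i j => Disjoint (F i) (F j)) :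
    ∑ i, #(F i) ≤ #G.edgeFinset := by
  rw [← card_biUnion fun i _ j _ hij => hdisj hij]
  refine card_le_card fun e he => ?_
  obtain ⟨i, -, hei⟩ := mem_biUnion.1 he
  exact mem_edgeFinset.2 (hF i hei)

end Fintype

end SimpleGraph

open SimpleGraph

/-- If G is a connected simple r-regular graph containing r+1 pairwise
edge-disjoint maximum matchings, then r is even and G is the complete graph on r+1
vertices. -/
theorem even_and_complete_of_regular_with_disjoint_maximum_matchings
    {V : Type} [Fintype V] [DecidableEq V] (G : SimpleGraph V) [DecidableRel G.Adj]
    (r : ℕ) (hconn : G.Connected) (hreg : G.IsRegularOfDegree r)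
    (F : Fin (r + 1) → Finset (Sym2 V))
    (hmax : ∀ i, G.IsFinsetMaximumMatching (F i))
    (hdisj : ∀ i j, i ≠ j → Disjoint (F i) (F j)) :
    Even r ∧ G = ⊤ ∧ Fintype.card V = r + 1 := by
  have hexposed : ∀ v, ∃ i, v ∉ coveredVerts (F i) := fun v => by
    by_contra! h
    have := card_le_degree_of_forall_mem_coveredVerts (fun i => (hmax i).1.1) hdisj h
    simp [hreg v] at this
  obtain ⟨v₀⟩ := hconn.nonempty
  obtain ⟨i₀, hi₀⟩ := hexposed v₀
  set ν := #(F i₀)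
  have hV : Fintype.card V = 2 * ν + 1 := (hmax i₀).1.card_eq_two_mul_add_one hi₀ fun w hw =>
    (hmax i₀).eq_of_notMem_coveredVerts hconn
      (fun v => (hexposed v).elim fun i hi => ⟨F i, hmax i, hi⟩) hw hi₀
  have hedges : (r + 1) * ν ≤ #G.edgeFinset := by
    simpa [fun i => (hmax i).card_eq (hmax i₀)] using
      sum_card_le_card_edgeFinset (fun i => (hmax i).1.1) hdisj
  have hdegrees : Fintype.card V * r = 2 * #G.edgeFinset := by
    rw [← sum_degrees_eq_twice_card_edges, sum_congr rfl fun v _ => hreg v, sum_const, card_univ,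
      smul_eq_mul]
  have hr : r < Fintype.card V := hreg v₀ ▸ G.degree_lt_card_verts v₀
  have h2ν : 2 * ν ≤ r := by nlinarith
  have hrV : Fintype.card V = r + 1 := by omega
  exact ⟨⟨ν, by omega⟩, hreg.eq_top_of_card_eq hrV, hrV⟩
end

section
/- Let G be a graph with minimum degree at least 2 such that every edge joins a vertex of degree 2 to a vertex of degree at least 3. Then the maximum matching size of G equals the number of vertices of degree at least 3, i.e. ν₁(G) = |{v : d(v) ≥ 3}|. -/
namespace Multigraph

/-- In a loopless multigraph, the degree of a vertex is the number of incident edges. -/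
lemma deg_eq_card (G : Multigraph) (hl : G.Loopless) (v : G.V) :
    G.deg v = (Finset.univ.filter (fun e => v ∈ G.ends e)).card := by
  rw [deg, Finset.card_filter]
  refine Finset.sum_congr rfl fun e _ => ?_
  have hne : G.ends e ≠ Sym2.diag v := by
    intro h
    exact hl e (by rw [IsLoop, h]; exact Sym2.diag_isDiag v)
  simp [hne]

/-- If a vertex of degree ≥ 3 lies on an edge, the other end has degree 2. -/
lemma big_end (G : Multigraph)
    (hedge : ∀ e : G.E, ∃ u v : G.V, G.ends e = s(u, v) ∧ G.deg u = 2 ∧ 3 ≤ G.deg v)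
    {e : G.E} {b : G.V} (hb : 3 ≤ G.deg b) (hmem : b ∈ G.ends e) :
    ∃ u, G.ends e = s(b, u) ∧ G.deg u = 2 := by
  obtain ⟨u, v, he, hu, hv⟩ := hedge e
  rw [he, Sym2.mem_iff] at hmem
  rcases hmem with rfl | rfl
  · omega
  · exact ⟨u, by rw [he, Sym2.eq_swap], hu⟩

/-- A neighbor of a vertex of degree ≥ 3 has degree 2 (and is distinct from it). -/
lemma adj_deg_two (G : Multigraph)
    (hedge : ∀ e : G.E, ∃ u v : G.V, G.ends e = s(u, v) ∧ G.deg u = 2 ∧ 3 ≤ G.deg v)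
    {e : G.E} {b a : G.V} (hb : 3 ≤ G.deg b)
    (he : G.ends e = s(b, a)) : G.deg a = 2 ∧ a ≠ b := by
  obtain ⟨u, hu, hu2⟩ := G.big_end hedge hb (by rw [he]; exact Sym2.mem_mk_left _ _)
  rw [he, Sym2.eq_iff] at hu
  rcases hu with ⟨-, rfl⟩ | ⟨h1, h2⟩
  · exact ⟨hu2, fun h => by rw [h] at hu2; omega⟩
  · rw [← h1] at hu2; omega

/-- If δ(G) ≥ 2 and every edge joins a degree-2 vertex to a vertex of degree
at least 3, then ν₁(G) equals the number of vertices of degree at least 3. -/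
theorem nu1_eq_card_deg_ge_three
    (G : Multigraph) (hloopless : G.Loopless)
    (hδ : ∀ v : G.V, 2 ≤ G.deg v)
    (hedge : ∀ e : G.E, ∃ u v : G.V, G.ends e = s(u, v) ∧ G.deg u = 2 ∧ 3 ≤ G.deg v) :
    G.nu1 = (Finset.univ.filter (fun v : G.V => 3 ≤ G.deg v)).card := by
  classical
  set B : Finset G.V := Finset.univ.filter (fun v => 3 ≤ G.deg v) with hB
  -- Upper bound: every matching has size at most |B|.
  have hub : ∀ M : Finset G.E, G.IsMatching M → M.card ≤ B.card := by
    intro M hM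
    choose u v hends hdu hdv using hedge
    refine Finset.card_le_card_of_injOn v (fun e _ => ?_) ?_
    · simp [hB, hdv e]
    · intro e he e' he' hvv
      by_contra hne
      exact hM.2 e he e' he' hne (v e) (by rw [hends e]; exact Sym2.mem_mk_right _ _)
        (by rw [hends e', ← hvv]; exact Sym2.mem_mk_right _ _)
  -- Hall's condition for the bipartite graph between B and its neighbors.
  set r : {x : G.V // 3 ≤ G.deg x} → Finset G.V :=
    fun b => Finset.univ.filter (fun a => ∃ e, G.ends e = s(b.val, a)) with hr
  have hall : ∀ S : Finset {x : G.V // 3 ≤ G.deg x}, S.card ≤ (S.biUnion r).card := by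
    intro S
    set T := S.biUnion r with hT
    set inc := fun (w : G.V) => Finset.univ.filter (fun e => w ∈ G.ends e) with hinc
    have hdisj : ∀ b ∈ S, ∀ b' ∈ S, b ≠ b' → Disjoint (inc b.val) (inc b'.val) := by
      intro b _ b' _ hbb
      rw [Finset.disjoint_left]
      intro e he he'
      simp only [hinc, Finset.mem_filter] at he he'
      obtain ⟨w, hw, hw2⟩ := G.big_end hedge b.2 he.2
      rw [hw, Sym2.mem_iff] at he'
      rcases he'.2 with h | h
      · exact hbb (Subtype.ext (h.symm))
      · have := b'.2; rw [h] at this; omega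
    have h1 : 3 * S.card ≤ (S.biUnion (fun b => inc b.val)).card := by
      rw [Finset.card_biUnion hdisj]
      calc 3 * S.card = ∑ _b ∈ S, 3 := by rw [Finset.sum_const, smul_eq_mul, mul_comm]
        _ ≤ ∑ b ∈ S, (inc b.val).card := Finset.sum_le_sum fun b _ => by
              rw [hinc]; rw [← G.deg_eq_card hloopless]; exact b.2
    have hsub : S.biUnion (fun b => inc b.val) ⊆ T.biUnion inc := by
      intro e he
      rw [Finset.mem_biUnion] at he ⊢
      obtain ⟨b, hbS, hbe⟩ := he
      simp only [hinc, Finset.mem_filter] at hbe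
      obtain ⟨w, hw, hw2⟩ := G.big_end hedge b.2 hbe.2
      refine ⟨w, ?_, ?_⟩
      · rw [hT, Finset.mem_biUnion]
        refine ⟨b, hbS, ?_⟩
        simp only [hr, Finset.mem_filter, Finset.mem_univ, true_and]
        exact ⟨e, hw⟩
      · simp only [hinc, Finset.mem_filter, Finset.mem_univ, true_and, hw]
        exact Sym2.mem_mk_right _ _
    have h2 : (T.biUnion inc).card ≤ 2 * T.card := by
      calc (T.biUnion inc).card ≤ ∑ a ∈ T, (inc a).card := Finset.card_biUnion_le
        _ ≤ ∑ _a ∈ T, 2 := Finset.sum_le_sum (by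
            intro a haT
            rw [hinc]
            rw [← G.deg_eq_card hloopless]
            rw [hT, Finset.mem_biUnion] at haT
            obtain ⟨b, hbS, hab⟩ := haT
            simp only [hr, Finset.mem_filter, Finset.mem_univ, true_and] at hab
            obtain ⟨e, he⟩ := hab
            exact (G.adj_deg_two hedge b.2 he).1.le)
        _ = 2 * T.card := by rw [Finset.sum_const, smul_eq_mul, mul_comm]
    have := (h1.trans (Finset.card_le_card hsub)).trans h2
    omega
  obtain ⟨f, hfinj, hfr⟩ := (Finset.all_card_le_biUnion_card_iff_exists_injective r).mp hall
  have hfr' : ∀ b, ∃ e, G.ends e = s(b.val, f b) := by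
    intro b
    have := hfr b
    simp only [hr, Finset.mem_filter, Finset.mem_univ, true_and] at this
    exact this
  choose g hg using hfr'
  have hfdeg : ∀ b, G.deg (f b) = 2 ∧ f b ≠ b.val := fun b =>
    G.adj_deg_two hedge b.2 (hg b)
  have hginj : Function.Injective g := by
    intro b b' hgg
    have hh : s(b.val, f b) = s(b'.val, f b') := by rw [← hg b, ← hg b', hgg]
    rw [Sym2.eq_iff] at hh
    rcases hh with ⟨h1, -⟩ | ⟨h1, h2⟩
    · exact Subtype.ext h1
    · exfalso
      have h3 := (hfdeg b').1
      have h4 := b.2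
      rw [← h1] at h3
      omega
  set M : Finset G.E := Finset.image g Finset.univ with hM
  have hMcard : M.card = B.card := by
    rw [hM, Finset.card_image_of_injective _ hginj, Finset.card_univ, Fintype.card_subtype]
  have hMmatch : G.IsMatching M := by
    constructor
    · intro e he
      rw [hM, Finset.mem_image] at he
      obtain ⟨b, -, rfl⟩ := he
      rw [IsLoop, hg b, Sym2.mk_isDiag_iff]
      exact fun h => (hfdeg b).2 h.symm
    · intro e he e' he' hne w hw hw'
      rw [hM, Finset.mem_image] at he he'
      obtain ⟨b, -, rfl⟩ := he
      obtain ⟨b', -, rfl⟩ := he'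
      have hbb : b ≠ b' := fun h => hne (by rw [h])
      rw [hg b, Sym2.mem_iff] at hw
      rw [hg b', Sym2.mem_iff] at hw'
      rcases hw with rfl | rfl
      · rcases hw' with h | h
        · exact hbb (Subtype.ext h)
        · have h3 := (hfdeg b').1
          have h4 := b.2
          rw [← h] at h3
          omega
      · rcases hw' with h | h
        · have h3 := (hfdeg b).1
          have h4 := b'.2
          rw [h] at h3
          omega
        · exact hbb (hfinj h)
  -- Assemble via sSup.
  have hbdd : BddAbove {m | ∃ M : Finset G.E, G.IsMatching M ∧ M.card = m} := by
    refine ⟨Fintype.card G.E, fun m hm => ?_⟩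
    obtain ⟨M', -, rfl⟩ := hm
    exact Finset.card_le_univ M'
  have hne : {m | ∃ M : Finset G.E, G.IsMatching M ∧ M.card = m}.Nonempty :=
    ⟨0, ∅, ⟨fun e he => absurd he (Finset.notMem_empty e),
      fun e he => absurd he (Finset.notMem_empty e)⟩, rfl⟩
  rw [nu1]
  refine le_antisymm (csSup_le hne ?_) (le_csSup hbdd ⟨M, hMmatch, hMcard⟩)
  intro m hm
  obtain ⟨M', hM', rfl⟩ := hm
  exact hub M' hM'

end Multigraph
end

section
/- Let G be a graph with minimum degree at least 2 such that every edge joins a vertex of degree 2 to a vertex of degree at least 3. Then the maximum number of edges coverable by two disjoint matchings equals twice the number of vertices of degree at least 3, i.e. ν₂(G) = 2·|{v : d(v) ≥ 3}|. -/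
open Finset

theorem Finset.exists_section_injective_of_card_fiber {α β γ : Type*} [DecidableEq β]
    [DecidableEq γ] (F : Finset α) (B : Finset β) (p : α → β) (q : α → γ) {k : ℕ} (hk : 0 < k)
    (hp : ∀ b ∈ B, k ≤ #{e ∈ F | p e = b}) (hq : ∀ c, #{e ∈ F | q e = c} ≤ k) :
    ∃ s : B → α, (∀ b, s b ∈ F ∧ p (s b) = b) ∧ Function.Injective (q ∘ s) := by
  classical
  let fiber : B → Finset α := fun b => {e ∈ F | p e = b}
  -- Hall's condition, by double counting the elements of the fibres over `S`.
  have hall : ∀ S : Finset B, #S ≤ #(S.biUnion fun b => (fiber b).image q) := by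
    intro S
    have hfibers : k * #S ≤ #(S.biUnion fiber) := by
      rw [card_biUnion]
      · simpa [mul_comm] using sum_le_sum fun (b : B) (_ : b ∈ S) => hp b b.2
      · intro b _ b' _ hne
        refine disjoint_left.mpr fun e he he' => hne (Subtype.ext ?_)
        exact (mem_filter.mp he).2.symm.trans (mem_filter.mp he').2
    have himage : #(S.biUnion fiber) ≤ k * #(S.biUnion fun b => (fiber b).image q) := by
      refine card_le_mul_card_image_of_maps_to (f := q) (fun e he => ?_) k fun c _ => ?_
      · obtain ⟨b, hb, he⟩ := mem_biUnion.mp he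
        exact mem_biUnion.mpr ⟨b, hb, mem_image_of_mem q he⟩
      · refine (card_le_card fun e he => ?_).trans (hq c)
        obtain ⟨heS, rfl⟩ := mem_filter.mp he
        obtain ⟨b, -, heb⟩ := mem_biUnion.mp heS
        exact mem_filter.mpr ⟨(mem_filter.mp heb).1, rfl⟩
    exact Nat.le_of_mul_le_mul_left (hfibers.trans himage) hk
  obtain ⟨f, hf, hft⟩ := (all_card_le_biUnion_card_iff_exists_injective _).mp hall
  have hsection : ∀ b : B, ∃ e ∈ F, p e = b ∧ q e = f b := by
    intro b
    obtain ⟨e, he, hqe⟩ := mem_image.mp (hft b)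
    exact ⟨e, (mem_filter.mp he).1, (mem_filter.mp he).2, hqe⟩
  choose s hsF hsp hsq using hsection
  exact ⟨s, fun b => ⟨hsF b, hsp b⟩, fun b b' h => hf (by simpa [hsq] using h)⟩

namespace Multigraph

section

variable {G : Multigraph}

def highDegreeVertices (G : Multigraph) : Finset G.V := {v | 3 ≤ G.deg v}

@[simp]
lemma mem_highDegreeVertices {v : G.V} : v ∈ G.highDegreeVertices ↔ 3 ≤ G.deg v := by
  simp [highDegreeVertices]

lemma deg_eq_card_incident (hG : G.Loopless) (v : G.V) : G.deg v = #{e | v ∈ G.ends e} := by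
  rw [deg, card_filter]
  refine sum_congr rfl fun e _ => ?_
  have h : G.ends e ≠ Sym2.diag v := fun h => hG e (by rw [IsLoop, h]; exact Sym2.diag_isDiag v)
  simp [h]

variable {low high : G.E → G.V}

lemma IsMatching.injOn_high (hends : ∀ e, G.ends e = s(low e, high e)) {M : Finset G.E}
    (hM : G.IsMatching M) : Set.InjOn high M := by
  intro e he f hf hef
  by_contra hne
  exact hM.2 e he f hf hne (high e) (by simp [hends]) (by simp [hends, hef])

lemma IsMatching.card_filter_high_le_one (hends : ∀ e, G.ends e = s(low e, high e))
    {M : Finset G.E} (hM : G.IsMatching M) (v : G.V) : #{e ∈ M | high e = v} ≤ 1 :=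
  card_le_one.mpr fun _ he _ hf =>
    hM.injOn_high hends (mem_filter.mp he).1 (mem_filter.mp hf).1
      ((mem_filter.mp he).2.trans (mem_filter.mp hf).2.symm)

lemma IsMatching.card_le_card_highDegreeVertices (hends : ∀ e, G.ends e = s(low e, high e))
    (hhigh : ∀ e, 3 ≤ G.deg (high e)) {M : Finset G.E} (hM : G.IsMatching M) :
    #M ≤ #G.highDegreeVertices :=
  card_le_card_of_injOn high (fun e _ => by simp [hhigh])
    (hM.injOn_high hends)

lemma low_ne_high (hlow : ∀ e, G.deg (low e) = 2) (hhigh : ∀ e, 3 ≤ G.deg (high e))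
    (e f : G.E) : low e ≠ high f := by
  intro h
  have := hhigh f
  rw [← h, hlow] at this
  omega

lemma mem_ends_iff_high_eq (hends : ∀ e, G.ends e = s(low e, high e))
    (hlow : ∀ e, G.deg (low e) = 2) {v : G.V} (hv : 3 ≤ G.deg v) (e : G.E) :
    v ∈ G.ends e ↔ high e = v := by
  rw [hends, Sym2.mem_iff]
  constructor
  · rintro (rfl | rfl)
    · have := hlow e; omega
    · rfl
  · exact fun h => Or.inr h.symm

lemma card_filter_high_eq_deg (hG : G.Loopless) (hends : ∀ e, G.ends e = s(low e, high e))
    (hlow : ∀ e, G.deg (low e) = 2) {v : G.V} (hv : 3 ≤ G.deg v) :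
    #{e | high e = v} = G.deg v := by
  simp_rw [deg_eq_card_incident hG, mem_ends_iff_high_eq hends hlow hv]

lemma card_filter_low_le_two (hG : G.Loopless) (hends : ∀ e, G.ends e = s(low e, high e))
    (hlow : ∀ e, G.deg (low e) = 2) (F : Finset G.E) (c : G.V) :
    #{e ∈ F | low e = c} ≤ 2 := by
  obtain h | ⟨e, he⟩ := eq_empty_or_nonempty {e ∈ F | low e = c}
  · simp [h]
  obtain ⟨-, rfl⟩ := mem_filter.mp he
  calc #{f ∈ F | low f = low e} ≤ #{f | low e ∈ G.ends f} :=
        card_le_card fun f hf => by simp_all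
    _ = 2 := by rw [← deg_eq_card_incident hG, hlow]

lemma exists_isMatching_subset_card_eq (hG : G.Loopless)
    (hends : ∀ e, G.ends e = s(low e, high e)) (hlow : ∀ e, G.deg (low e) = 2)
    (hhigh : ∀ e, 3 ≤ G.deg (high e)) (F : Finset G.E)
    (hF : ∀ v ∈ G.highDegreeVertices, 2 ≤ #{e ∈ F | high e = v}) :
    ∃ M ⊆ F, G.IsMatching M ∧ #M = #G.highDegreeVertices := by
  obtain ⟨s, hs, hinj⟩ := F.exists_section_injective_of_card_fiber G.highDegreeVertices high low
    two_pos hF (card_filter_low_le_two hG hends hlow F)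
  have hs_inj : Function.Injective s := fun b b' h =>
    Subtype.ext (by rw [← (hs b).2, ← (hs b').2, h])
  refine ⟨univ.image s, image_subset_iff.mpr fun b _ => (hs b).1, ⟨?_, ?_⟩, ?_⟩
  · intro e _ hloop
    rw [IsLoop, hends, Sym2.mk_isDiag_iff] at hloop
    exact low_ne_high hlow hhigh e e hloop
  · intro e he f hf hne v hve hvf
    obtain ⟨b, -, rfl⟩ := mem_image.mp he
    obtain ⟨b', -, rfl⟩ := mem_image.mp hf
    have hbb' : b ≠ b' := fun h => hne (h ▸ rfl)
    rw [hends, Sym2.mem_iff] at hve hvf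
    rcases hve with rfl | rfl <;> rcases hvf with h | h
    · exact hbb' (hinj h)
    · exact low_ne_high hlow hhigh _ _ h
    · exact low_ne_high hlow hhigh _ _ h.symm
    · exact hbb' (Subtype.ext (by rw [← (hs b).2, ← (hs b').2, h]))
  · rw [card_image_of_injective _ hs_inj, card_univ, Fintype.card_coe]

lemma exists_disjoint_isMatching_card_eq (hG : G.Loopless)
    (hends : ∀ e, G.ends e = s(low e, high e)) (hlow : ∀ e, G.deg (low e) = 2)
    (hhigh : ∀ e, 3 ≤ G.deg (high e)) :
    ∃ M₁ M₂, G.IsMatching M₁ ∧ G.IsMatching M₂ ∧ Disjoint M₁ M₂ ∧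
      #M₁ = #G.highDegreeVertices ∧ #M₂ = #G.highDegreeVertices := by
  have hdeg : ∀ v ∈ G.highDegreeVertices, 3 ≤ #{e | high e = v} := fun v hv => by
    rw [mem_highDegreeVertices] at hv
    rwa [card_filter_high_eq_deg hG hends hlow hv]
  obtain ⟨M₁, -, hM₁, hcard₁⟩ := exists_isMatching_subset_card_eq hG hends hlow hhigh univ
    fun v hv => by have := hdeg v hv; omega
  have hrest : ∀ v ∈ G.highDegreeVertices, 2 ≤ #{e ∈ univ \ M₁ | high e = v} := by
    intro v hv
    have hsplit : #{e | high e = v} ≤ #{e ∈ M₁ | high e = v} + #{e ∈ univ \ M₁ | high e = v} :=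
      (card_le_card fun e he => by by_cases e ∈ M₁ <;> simp_all).trans (card_union_le _ _)
    have := hM₁.card_filter_high_le_one hends v
    have := hdeg v hv
    omega
  obtain ⟨M₂, hM₂F, hM₂, hcard₂⟩ := exists_isMatching_subset_card_eq hG hends hlow hhigh _ hrest
  exact ⟨M₁, M₂, hM₁, hM₂, disjoint_of_subset_right hM₂F disjoint_sdiff, hcard₁, hcard₂⟩

lemma nu2_eq_of_forall_le_of_exists {n : ℕ}
    (hle : ∀ H H', G.IsMatching H → G.IsMatching H' → Disjoint H H' → #H + #H' ≤ n)
    (hex : ∃ H H', G.IsMatching H ∧ G.IsMatching H' ∧ Disjoint H H' ∧ #H + #H' = n) :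
    G.nu2 = n :=
  IsGreatest.csSup_eq ⟨hex, by rintro m ⟨H, H', hH, hH', hd, rfl⟩; exact hle H H' hH hH' hd⟩

end

theorem nu2_eq_two_mul_card_deg_ge_three_general
    (G : Multigraph) (hloopless : G.Loopless)
    (hedge : ∀ e : G.E, ∃ u v : G.V, G.ends e = s(u, v) ∧ G.deg u = 2 ∧ 3 ≤ G.deg v) :
    G.nu2 = 2 * (Finset.univ.filter (fun v : G.V => 3 ≤ G.deg v)).card := by
  change G.nu2 = 2 * #G.highDegreeVertices
  choose low high hends hlow hhigh using hedge
  refine nu2_eq_of_forall_le_of_exists (fun H H' hH hH' _ => ?_) ?_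
  · have := hH.card_le_card_highDegreeVertices hends hhigh
    have := hH'.card_le_card_highDegreeVertices hends hhigh
    omega
  · obtain ⟨M₁, M₂, hM₁, hM₂, hdisj, hcard₁, hcard₂⟩ :=
      exists_disjoint_isMatching_card_eq hloopless hends hlow hhigh
    exact ⟨M₁, M₂, hM₁, hM₂, hdisj, by omega⟩

/-- If δ(G) ≥ 2 and every edge joins a degree-2 vertex to a vertex of degree
at least 3, then ν₂(G) equals twice the number of vertices of degree at least 3. -/
theorem nu2_eq_two_mul_card_deg_ge_three
    (G : Multigraph) (hloopless : G.Loopless)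
    (hδ : ∀ v : G.V, 2 ≤ G.deg v)
    (hedge : ∀ e : G.E, ∃ u v : G.V, G.ends e = s(u, v) ∧ G.deg u = 2 ∧ 3 ≤ G.deg v) :
    G.nu2 = 2 * (Finset.univ.filter (fun v : G.V => 3 ≤ G.deg v)).card :=
  nu2_eq_two_mul_card_deg_ge_three_general G hloopless hedge

end Multigraph
end

section
/- Let G be a graph with minimum degree at least 2 such that every edge joins a vertex of degree 2 to a vertex of degree at least 3. Then G contains two edge-disjoint maximum matchings. -/
namespace Multigraph

lemma exists_two_coloring {α : Type} [DecidableEq α] (S : Finset α) :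
    ∀ (σ τ : α → α),
    (∀ x ∈ S, σ x ∈ S) → (∀ x ∈ S, σ (σ x) = x) → (∀ x ∈ S, σ x ≠ x) →
    (∀ x ∈ S, τ x ∈ S) → (∀ x ∈ S, τ (τ x) = x) →
    ∃ c : α → Bool, ∀ x ∈ S, (c (σ x) = !(c x)) ∧ (τ x ≠ x → c (τ x) = !(c x)) := by
  induction S using Finset.strongInduction with
  | _ S ih =>
    intro σ τ hσS hσσ hσne hτS hττ
    rcases S.eq_empty_or_nonempty with rfl | ⟨x, hx⟩
    · exact ⟨fun _ => true, by simp⟩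
    set x' := σ x with hx'def
    have hx'S : x' ∈ S := hσS x hx
    have hxx' : x' ≠ x := hσne x hx
    have hσx' : σ x' = x := hσσ x hx
    set S' := S \ {x, x'} with hS'def
    have hmemS' : ∀ y, y ∈ S' ↔ y ∈ S ∧ y ≠ x ∧ y ≠ x' := by
      intro y; simp [hS'def, not_or]
    have hS'sub : S' ⊂ S := by
      refine Finset.sdiff_ssubset ?_ ⟨x, by simp⟩
      intro y hy
      simp only [Finset.mem_insert, Finset.mem_singleton] at hy
      rcases hy with rfl | rfl <;> assumption
    set u := τ x with hudef
    set v := τ x' with hvdef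
    have huS : u ∈ S := hτS x hx
    have hvS : v ∈ S := hτS x' hx'S
    have hτu : τ u = x := hττ x hx
    have hτv : τ v = x' := hττ x' hx'S
    have huv : u ≠ v := by
      intro h; exact hxx' (by rw [← hτv, ← h, hτu])
    set τ' : α → α := fun y =>
      if τ y = x then (if v ∈ S' then v else y)
      else if τ y = x' then (if u ∈ S' then u else y)
      else τ y with hτ'def
    have hτ'S : ∀ y ∈ S', τ' y ∈ S' := by
      intro y hy
      obtain ⟨hyS, hyx, hyx'⟩ := (hmemS' y).mp hy
      by_cases h1 : τ y = x
      · simp only [hτ'def, if_pos h1]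
        split_ifs with h2
        · exact h2
        · exact hy
      · by_cases h2 : τ y = x'
        · simp only [hτ'def, if_neg h1, if_pos h2]
          split_ifs with h3
          · exact h3
          · exact hy
        · simp only [hτ'def, if_neg h1, if_neg h2]
          exact (hmemS' _).mpr ⟨hτS y hyS, h1, h2⟩
    have hτ'τ' : ∀ y ∈ S', τ' (τ' y) = y := by
      intro y hy
      obtain ⟨hyS, hyx, hyx'⟩ := (hmemS' y).mp hy
      by_cases h1 : τ y = x
      · have hyu : y = u := by rw [hudef, ← h1, hττ y hyS]
        by_cases h2 : v ∈ S'
        · have e1 : τ' y = v := by simp only [hτ'def, if_pos h1, if_pos h2]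
          rw [e1]
          have : τ v ≠ x := by rw [hτv]; exact hxx'
          simp only [hτ'def, if_neg this, if_pos hτv]
          rw [if_pos (hyu ▸ hy), hyu]
        · have e1 : τ' y = y := by simp only [hτ'def, if_pos h1, if_neg h2]
          rw [e1, e1]
      · by_cases h2 : τ y = x'
        · have hyv : y = v := by rw [hvdef, ← h2, hττ y hyS]
          by_cases h3 : u ∈ S'
          · have e1 : τ' y = u := by simp only [hτ'def, if_neg h1, if_pos h2, if_pos h3]
            rw [e1]
            simp only [hτ'def, if_pos hτu]
            rw [if_pos (hyv ▸ hy), hyv]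
          · have e1 : τ' y = y := by simp only [hτ'def, if_neg h1, if_pos h2, if_neg h3]
            rw [e1, e1]
        · have e1 : τ' y = τ y := by simp only [hτ'def, if_neg h1, if_neg h2]
          rw [e1]
          have hτyS : τ y ∈ S := hτS y hyS
          have h3 : τ (τ y) = y := hττ y hyS
          have h4 : τ (τ y) ≠ x := by rw [h3]; exact hyx
          have h5 : τ (τ y) ≠ x' := by rw [h3]; exact hyx'
          simp only [hτ'def, if_neg h4, if_neg h5]
          exact h3
    have hσS' : ∀ y ∈ S', σ y ∈ S' := by
      intro y hy
      obtain ⟨hyS, hyx, hyx'⟩ := (hmemS' y).mp hy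
      refine (hmemS' _).mpr ⟨hσS y hyS, ?_, ?_⟩
      · intro h; exact hyx' (by rw [hx'def, ← h, hσσ y hyS])
      · intro h; exact hyx (by rw [← hσx', ← h, hσσ y hyS])
    obtain ⟨c', hc'⟩ := ih S' hS'sub σ τ'
      hσS' (fun y hy => hσσ y ((hmemS' y).mp hy).1) (fun y hy => hσne y ((hmemS' y).mp hy).1)
      hτ'S hτ'τ'
    set cx : Bool := if u ∈ S' then !(c' u) else (if v ∈ S' then c' v else true) with hcxdef
    set c : α → Bool := fun y => if y = x then cx else if y = x' then !cx else c' y with hcdef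
    have hcx : c x = cx := by simp [hcdef]
    have hcx' : c x' = !cx := by simp [hcdef, hxx']
    have hcS' : ∀ y ∈ S', c y = c' y := by
      intro y hy
      obtain ⟨_, h1, h2⟩ := (hmemS' y).mp hy
      simp [hcdef, h1, h2]
    have hbridge : u ∈ S' → v ∈ S' → c' v = !(c' u) := by
      intro hu hv
      have e1 : τ' u = v := by simp only [hτ'def, if_pos hτu, if_pos hv]
      have := (hc' u hu).2 (by rw [e1]; exact fun h => huv h.symm)
      rw [e1] at this; exact this
    have hnotS' : ∀ y, y ∈ S → y ∉ S' → y = x ∨ y = x' := by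
      intro y hyS hyns
      by_contra h
      push_neg at h
      exact hyns ((hmemS' y).mpr ⟨hyS, h.1, h.2⟩)
    refine ⟨c, ?_⟩
    intro y hyS
    by_cases hyx : y = x
    · subst hyx
      constructor
      · rw [← hx'def, hcx', hcx]
      · intro hne
        rw [← hudef, hcx]
        by_cases hu : u ∈ S'
        · rw [hcS' u hu]; simp [hcxdef, hu]
        · rcases hnotS' u huS hu with h | h
          · exact absurd h (hudef ▸ hne)
          · rw [h, hcx']
    · by_cases hyx' : y = x'
      · subst hyx'
        constructor
        · rw [hσx', hcx, hcx']; simp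
        · intro hne
          rw [← hvdef, hcx']
          by_cases hv : v ∈ S'
          · rw [hcS' v hv]
            by_cases hu : u ∈ S'
            · rw [hbridge hu hv]; simp [hcxdef, hu]
            · simp [hcxdef, hu, hv]
          · rcases hnotS' v hvS hv with h | h
            · rw [h, hcx]; simp
            · exact absurd h (hvdef ▸ hne)
      · have hyS' : y ∈ S' := (hmemS' y).mpr ⟨hyS, hyx, hyx'⟩
        constructor
        · rw [hcS' _ (hσS' y hyS'), hcS' y hyS']
          exact (hc' y hyS').1
        · intro hne
          by_cases h1 : τ y = x
          · have hyu : y = u := by rw [hudef, ← h1, hττ y hyS]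
            rw [h1, hcx, hcS' y hyS', hyu]
            have hu : u ∈ S' := hyu ▸ hyS'
            simp [hcxdef, hu]
          · by_cases h2 : τ y = x'
            · have hyv : y = v := by rw [hvdef, ← h2, hττ y hyS]
              rw [h2, hcx', hcS' y hyS', hyv]
              have hv : v ∈ S' := hyv ▸ hyS'
              by_cases hu : u ∈ S'
              · rw [hbridge hu hv]; simp [hcxdef, hu]
              · simp [hcxdef, hu, hv]
            · have e1 : τ' y = τ y := by simp only [hτ'def, if_neg h1, if_neg h2]
              have hτyS' : τ y ∈ S' := (hmemS' _).mpr ⟨hτS y hyS, h1, h2⟩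
              rw [hcS' _ hτyS', hcS' y hyS']
              have := (hc' y hyS').2 (by rw [e1]; exact hne)
              rw [e1] at this; exact this

set_option maxHeartbeats 2000000 in
/-- If δ(G) ≥ 2 and every edge joins a degree-2 vertex to a vertex of degree
at least 3, then G contains two edge-disjoint maximum matchings. -/
theorem exists_two_disjoint_maximum_matchings
    (G : Multigraph) (hloopless : G.Loopless)
    (hδ : ∀ v : G.V, 2 ≤ G.deg v)
    (hedge : ∀ e : G.E, ∃ u v : G.V, G.ends e = s(u, v) ∧ G.deg u = 2 ∧ 3 ≤ G.deg v) :
    ∃ F F' : Finset G.E, G.IsMaximumMatching F ∧ G.IsMaximumMatching F' ∧ Disjoint F F' := by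
  classical
  choose aE bE hends hadeg hbdeg using hedge
  have hdegcard : ∀ v : G.V, G.deg v = (Finset.univ.filter (fun e => v ∈ G.ends e)).card := by
    intro v
    rw [deg, Finset.card_filter]
    refine Finset.sum_congr rfl fun e _ => ?_
    have : G.ends e ≠ Sym2.diag v := by
      intro h
      exact hloopless e (by rw [IsLoop, h]; exact Sym2.diag_isDiag v)
    simp [this]
  have haE : ∀ e, aE e ∈ G.ends e := by
    intro e; rw [hends e]; exact Sym2.mem_mk_left _ _
  have hbE : ∀ e, bE e ∈ G.ends e := by
    intro e; rw [hends e]; exact Sym2.mem_mk_right _ _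
  have hbEu : ∀ e v, v ∈ G.ends e → 3 ≤ G.deg v → bE e = v := by
    intro e v hv h3
    rw [hends e, Sym2.mem_iff] at hv
    rcases hv with rfl | rfl
    · have := hadeg e; omega
    · rfl
  have haEu : ∀ e v, v ∈ G.ends e → G.deg v = 2 → aE e = v := by
    intro e v hv h2
    rw [hends e, Sym2.mem_iff] at hv
    rcases hv with rfl | rfl
    · rfl
    · have := hbdeg e; omega
  -- two edges with only one sharing the deg-2 end
  have htwo : ∀ e f g : G.E, e ≠ f → aE f = aE e → aE g = aE e → g = e ∨ g = f := by
    intro e f g hef hfe hge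
    have hcard : (Finset.univ.filter (fun e' => aE e ∈ G.ends e')).card = 2 := by
      rw [← hdegcard]; exact hadeg e
    have hmem : ∀ h : G.E, aE h = aE e → h ∈ Finset.univ.filter (fun e' => aE e ∈ G.ends e') := by
      intro h hh
      simp only [Finset.mem_filter, Finset.mem_univ, true_and]
      rw [← hh]; exact haE h
    have hsub : ({e, f} : Finset G.E) ⊆ Finset.univ.filter (fun e' => aE e ∈ G.ends e') := by
      intro h hh
      simp only [Finset.mem_insert, Finset.mem_singleton] at hh
      rcases hh with rfl | rfl
      · exact hmem h rfl
      · exact hmem h hfe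
    have : ({e, f} : Finset G.E) = Finset.univ.filter (fun e' => aE e ∈ G.ends e') := by
      apply Finset.eq_of_subset_of_card_le hsub
      rw [hcard, Finset.card_insert_of_notMem (by simpa using hef), Finset.card_singleton]
    have hg := hmem g hge
    rw [← this] at hg
    simpa using hg
  -- pick two distinct edges per heavy vertex
  have hpick : ∀ w : {v : G.V // 3 ≤ G.deg v},
      ∃ e f : G.E, e ≠ f ∧ (w : G.V) ∈ G.ends e ∧ (w : G.V) ∈ G.ends f := by
    rintro ⟨v, hv⟩
    have hcard : 1 < (Finset.univ.filter (fun e => v ∈ G.ends e)).card := by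
      have := hdegcard v; omega
    obtain ⟨e, he, f, hf, hef⟩ := Finset.one_lt_card.mp hcard
    exact ⟨e, f, hef, (Finset.mem_filter.mp he).2, (Finset.mem_filter.mp hf).2⟩
  choose e1 e2 hne h1 h2 using hpick
  set K : Finset G.E := Finset.univ.image e1 ∪ Finset.univ.image e2 with hKdef
  set wOf : G.E → {v : G.V // 3 ≤ G.deg v} := fun e => ⟨bE e, hbdeg e⟩ with hwOfdef
  have hbE1 : ∀ w, bE (e1 w) = (w : G.V) := fun w => hbEu _ _ (h1 w) w.2
  have hbE2 : ∀ w, bE (e2 w) = (w : G.V) := fun w => hbEu _ _ (h2 w) w.2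
  have hwOf1 : ∀ w, wOf (e1 w) = w := fun w => Subtype.ext (hbE1 w)
  have hwOf2 : ∀ w, wOf (e2 w) = w := fun w => Subtype.ext (hbE2 w)
  have hK1 : ∀ w, e1 w ∈ K := by
    intro w; rw [hKdef]
    exact Finset.mem_union_left _ (Finset.mem_image_of_mem e1 (Finset.mem_univ w))
  have hK2 : ∀ w, e2 w ∈ K := by
    intro w; rw [hKdef]
    exact Finset.mem_union_right _ (Finset.mem_image_of_mem e2 (Finset.mem_univ w))
  have hKmem : ∀ e ∈ K, e = e1 (wOf e) ∨ e = e2 (wOf e) := by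
    intro e he
    rw [hKdef, Finset.mem_union, Finset.mem_image, Finset.mem_image] at he
    rcases he with ⟨w, _, rfl⟩ | ⟨w, _, rfl⟩
    · left; rw [hwOf1]
    · right; rw [hwOf2]
  set σ : G.E → G.E := fun e => if e = e1 (wOf e) then e2 (wOf e) else e1 (wOf e) with hσdef
  have hσS : ∀ e ∈ K, σ e ∈ K := by
    intro e _
    rw [hσdef]; dsimp only
    split_ifs
    · exact hK2 _
    · exact hK1 _
  have hσ_cases : ∀ e ∈ K, (e = e1 (wOf e) ∧ σ e = e2 (wOf e)) ∨ (e = e2 (wOf e) ∧ σ e = e1 (wOf e)) := by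
    intro e he
    by_cases h : e = e1 (wOf e)
    · left; exact ⟨h, by rw [hσdef]; simp only [if_pos h]⟩
    · right
      rcases hKmem e he with h' | h'
      · exact absurd h' h
      · exact ⟨h', by rw [hσdef]; simp only [if_neg h]⟩
  have hσσ : ∀ e ∈ K, σ (σ e) = e := by
    intro e he
    rcases hσ_cases e he with ⟨h, hs⟩ | ⟨h, hs⟩
    · rw [hs, hσdef]; dsimp only
      rw [hwOf2 (wOf e), if_neg (fun hh => hne (wOf e) hh.symm)]
      exact h.symm
    · rw [hs, hσdef]; dsimp only
      rw [hwOf1 (wOf e), if_pos rfl]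
      exact h.symm
  have hσne : ∀ e ∈ K, σ e ≠ e := by
    intro e he
    rcases hσ_cases e he with ⟨h, hs⟩ | ⟨h, hs⟩
    · rw [hs]; intro hh; exact hne (wOf e) (h.symm.trans hh.symm)
    · rw [hs]; intro hh; exact hne (wOf e) (hh.trans h)
  set τ : G.E → G.E := fun e =>
    if h : ∃ f, f ∈ K ∧ f ≠ e ∧ aE f = aE e then h.choose else e with hτdef
  have hτspec : ∀ e, (∃ f, f ∈ K ∧ f ≠ e ∧ aE f = aE e) →
      τ e ∈ K ∧ τ e ≠ e ∧ aE (τ e) = aE e := by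
    intro e h
    rw [hτdef]; dsimp only
    rw [dif_pos h]
    exact h.choose_spec
  have hτid : ∀ e, ¬(∃ f, f ∈ K ∧ f ≠ e ∧ aE f = aE e) → τ e = e := by
    intro e h
    rw [hτdef]; dsimp only
    rw [dif_neg h]
  have hτS : ∀ e ∈ K, τ e ∈ K := by
    intro e he
    by_cases h : ∃ f, f ∈ K ∧ f ≠ e ∧ aE f = aE e
    · exact (hτspec e h).1
    · rw [hτid e h]; exact he
  have hττ : ∀ e ∈ K, τ (τ e) = e := by
    intro e he
    by_cases h : ∃ f, f ∈ K ∧ f ≠ e ∧ aE f = aE e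
    · obtain ⟨hfK, hfe, hfa⟩ := hτspec e h
      have h' : ∃ g, g ∈ K ∧ g ≠ τ e ∧ aE g = aE (τ e) := ⟨e, he, fun hh => hfe hh.symm, by rw [hfa]⟩
      obtain ⟨hgK, hge, hga⟩ := hτspec (τ e) h'
      rcases htwo e (τ e) (τ (τ e)) (fun hh => hfe hh.symm) hfa (by rw [hga, hfa]) with hh | hh
      · exact hh
      · exact absurd hh hge
    · rw [hτid e h, hτid e h]
  have hτpair : ∀ e ∈ K, ∀ f ∈ K, e ≠ f → aE f = aE e → f = τ e := by
    intro e he f hf hef hfa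
    have h : ∃ f', f' ∈ K ∧ f' ≠ e ∧ aE f' = aE e := ⟨f, hf, fun hh => hef hh.symm, hfa⟩
    obtain ⟨hgK, hge, hga⟩ := hτspec e h
    rcases htwo e f (τ e) hef hfa hga with hh | hh
    · exact absurd hh hge
    · exact hh.symm
  have hσpair : ∀ e ∈ K, ∀ f ∈ K, e ≠ f → bE e = bE f → f = σ e := by
    intro e he f hf hef hb
    have hw : wOf f = wOf e := Subtype.ext hb.symm
    rcases hσ_cases e he with ⟨h, hs⟩ | ⟨h, hs⟩ <;> rcases hKmem f hf with h' | h'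
    · exact absurd (h.trans ((congrArg e1 hw.symm).trans h'.symm)) hef
    · exact h'.trans ((congrArg e2 hw).trans hs.symm)
    · exact h'.trans ((congrArg e1 hw).trans hs.symm)
    · exact absurd (h.trans ((congrArg e2 hw.symm).trans h'.symm)) hef
  obtain ⟨c, hc⟩ := exists_two_coloring K σ τ hσS hσσ hσne hτS hττ
  -- the two matchings
  set F : Finset G.E := K.filter (fun e => c e = true) with hFdef
  set F' : Finset G.E := K.filter (fun e => c e = false) with hF'def
  have hFK : ∀ {e}, e ∈ F → e ∈ K ∧ c e = true := fun he => Finset.mem_filter.mp he |>.imp_left id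
  have hF'K : ∀ {e}, e ∈ F' → e ∈ K ∧ c e = false := fun he => Finset.mem_filter.mp he |>.imp_left id
  -- matching property
  have hmatch : ∀ (M : Finset G.E), (∀ {e}, e ∈ M → e ∈ K ∧ c e = c e) →
      (∀ e ∈ M, ∀ f ∈ M, c e = c f) → G.IsMatching M := by
    intro M hMK hMc
    constructor
    · exact fun e _ => hloopless e
    · intro e he f hf hef v hve hvf
      have heK := (hMK he).1
      have hfK := (hMK hf).1
      have hcef := hMc e he f hf
      rw [hends e, Sym2.mem_iff] at hve
      rw [hends f, Sym2.mem_iff] at hvf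
      rcases hve with rfl | rfl <;> rcases hvf with hv | hv
      · -- aE e = aE f
        have := hτpair e heK f hfK hef hv.symm
        have hcf := (hc e heK).2 (by rw [← this]; exact fun hh => hef hh.symm)
        rw [← this] at hcf
        rw [hcf] at hcef
        simp at hcef
      · have d1 := hadeg e
        have d2 := hbdeg f
        rw [← hv] at d2
        omega
      · have d1 := hadeg f
        have d2 := hbdeg e
        rw [← hv] at d1
        omega
      · -- bE e = bE f
        have := hσpair e heK f hfK hef (by rw [hv])
        have hcf := (hc e heK).1
        rw [← this] at hcf
        rw [hcf] at hcef
        simp at hcef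
  have hFmatch : G.IsMatching F := by
    apply hmatch F (fun he => ⟨(hFK he).1, rfl⟩)
    intro e he f hf
    rw [(hFK he).2, (hFK hf).2]
  have hF'match : G.IsMatching F' := by
    apply hmatch F' (fun he => ⟨(hF'K he).1, rfl⟩)
    intro e he f hf
    rw [(hF'K he).2, (hF'K hf).2]
  -- cardinalities
  set Bs : Finset G.V := Finset.univ.filter (fun v => 3 ≤ G.deg v) with hBsdef
  have hBmem : ∀ e : G.E, bE e ∈ Bs := by
    intro e; rw [hBsdef]; simp [hbdeg e]
  have hinj : ∀ (M : Finset G.E), G.IsMatching M → ∀ e ∈ M, ∀ f ∈ M, bE e = bE f → e = f := by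
    intro M hM e he f hf hb
    by_contra hef
    exact hM.2 e he f hf hef (bE e) (hbE e) (hb ▸ hbE f)
  have hbound : ∀ (M : Finset G.E), G.IsMatching M → M.card ≤ Bs.card := by
    intro M hM
    apply Finset.card_le_card_of_injOn (fun e => bE e) (fun e _ => hBmem e)
    intro e he f hf hb
    exact hinj M hM e he f hf hb
  have hσ12 : ∀ w, σ (e1 w) = e2 w := by
    intro w
    rw [hσdef]; dsimp only
    rw [hwOf1, if_pos rfl]
  have hFcard : F.card = Bs.card := by
    apply Finset.card_bij (fun e _ => bE e) (fun e _ => hBmem e)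
    · intro e he f hf hb
      exact hinj F hFmatch e he f hf hb
    · intro v hv
      rw [hBsdef] at hv
      simp only [Finset.mem_filter, Finset.mem_univ, true_and] at hv
      set w : {v' : G.V // 3 ≤ G.deg v'} := ⟨v, hv⟩ with hwdef
      have hflip : c (e2 w) = !(c (e1 w)) := by
        rw [← hσ12 w]; exact (hc (e1 w) (hK1 w)).1
      by_cases hcw : c (e1 w) = true
      · exact ⟨e1 w, Finset.mem_filter.mpr ⟨hK1 w, hcw⟩, hbE1 w⟩
      · refine ⟨e2 w, Finset.mem_filter.mpr ⟨hK2 w, ?_⟩, hbE2 w⟩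
        rw [hflip]
        simp only [Bool.not_eq_true] at hcw
        rw [hcw]; rfl
  have hF'card : F'.card = Bs.card := by
    apply Finset.card_bij (fun e _ => bE e) (fun e _ => hBmem e)
    · intro e he f hf hb
      exact hinj F' hF'match e he f hf hb
    · intro v hv
      rw [hBsdef] at hv
      simp only [Finset.mem_filter, Finset.mem_univ, true_and] at hv
      set w : {v' : G.V // 3 ≤ G.deg v'} := ⟨v, hv⟩ with hwdef
      have hflip : c (e2 w) = !(c (e1 w)) := by
        rw [← hσ12 w]; exact (hc (e1 w) (hK1 w)).1
      by_cases hcw : c (e1 w) = false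
      · exact ⟨e1 w, Finset.mem_filter.mpr ⟨hK1 w, hcw⟩, hbE1 w⟩
      · refine ⟨e2 w, Finset.mem_filter.mpr ⟨hK2 w, ?_⟩, hbE2 w⟩
        rw [hflip]
        simp only [Bool.not_eq_false] at hcw
        rw [hcw]; rfl
  refine ⟨F, F', ⟨hFmatch, fun M hM => hFcard ▸ hbound M hM⟩,
    ⟨hF'match, fun M hM => hF'card ▸ hbound M hM⟩, ?_⟩
  rw [Finset.disjoint_left]
  intro e he he'
  have hA := (hFK he).2
  have hB := (hF'K he').2
  rw [hA] at hB
  exact Bool.noConfusion hB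

end Multigraph
end
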